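/- The normalization function n terminates and produces Negation Normal Form: for every match expression m, every element of the list n m is in NNF (negations occur only directly on primitives, no ¬True and no negated conjunctions), and the disjunction of the elements of n m is logically equivalent to m under any Boolean primitive matcher and packet. -/

import Mathlib

/-! Matching the disjunction `nnf m` is the Boolean `(nnf m).any (mmatch γ p)`, and this equals
`mmatch γ p m` by induction along the recursion of `nnf`: a conjunction distributes over the two
disjunctions, and a negated conjunction is a disjunction by De Morgan. -/

inductive MExpr (X : Type) where
  | prim (x : X) | neg (m : MExpr X) | and (m₁ m₂ : MExpr X) | tt
deriving DecidableEq

/-- Lifting of a Boolean primitive matcher to match expressions. -/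
def mmatch {X P : Type} (γ : X → P → Bool) (p : P) : MExpr X → Bool
  | .prim x => γ x p
  | .neg m => !(mmatch γ p m)
  | .and m₁ m₂ => mmatch γ p m₁ && mmatch γ p m₂
  | .tt => true

/-- NNF normalization: returns a list of match expressions whose
(meta-logical) disjunction is equivalent to the input. -/
def nnf {X : Type} : MExpr X → List (MExpr X)
  | .tt => [.tt]
  | .and m₁ m₂ => (nnf m₁).flatMap (fun x => (nnf m₂).map (fun y => MExpr.and x y))
  | .neg (.and m₁ m₂) => nnf (.neg m₁) ++ nnf (.neg m₂)
  | .neg (.neg m) => nnf m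
  | .neg .tt => []
  | .prim x => [.prim x]
  | .neg (.prim x) => [.neg (.prim x)]
termination_by m => sizeOf m

/-- Negation normal form: negations occur only directly on primitives. -/
def isNNF {X : Type} : MExpr X → Prop
  | .neg (.prim _) => True
  | .neg _ => False
  | .and m₁ m₂ => isNNF m₁ ∧ isNNF m₂
  | _ => True

theorem List.any_any_and {α β : Type*} (l₁ : List α) (l₂ : List β) (f : α → Bool) (g : β → Bool) :
    (l₁.any fun a => l₂.any fun b => f a && g b) = (l₁.any f && l₂.any g) := by
  rw [Bool.eq_iff_iff]
  simp only [List.any_eq_true, Bool.and_eq_true]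
  constructor
  · rintro ⟨a, ha, b, hb, hfa, hgb⟩
    exact ⟨⟨a, ha, hfa⟩, b, hb, hgb⟩
  · rintro ⟨⟨a, ha, hfa⟩, b, hb, hgb⟩
    exact ⟨a, ha, b, hb, hfa, hgb⟩

namespace MExpr

variable {X : Type}

theorem isNNF_of_mem_nnf {m m' : MExpr X} (h : m' ∈ nnf m) : isNNF m' := by
  induction m using nnf.induct generalizing m' with
  | case2 m₁ m₂ ih₂ ih₁ =>
    simp only [nnf, List.mem_flatMap, List.mem_map] at h
    obtain ⟨x, hx, y, hy, rfl⟩ := h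
    exact ⟨ih₁ hx, ih₂ hy⟩
  | case3 m₁ m₂ ih₁ ih₂ =>
    rw [nnf, List.mem_append] at h
    exact h.elim ih₁ ih₂
  | case4 m ih => exact ih (by rwa [nnf] at h)
  | case5 => simp [nnf] at h
  | _ => simp_all [nnf, isNNF]

theorem any_nnf_mmatch {P : Type} (γ : X → P → Bool) (p : P) (m : MExpr X) :
    (nnf m).any (mmatch γ p) = mmatch γ p m := by
  induction m using nnf.induct with
  | case2 m₁ m₂ ih₂ ih₁ =>
    simp only [nnf, mmatch, List.any_flatMap, List.any_map, Function.comp_def]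
    rw [List.any_any_and, ih₁, ih₂]
  | case3 m₁ m₂ ih₁ ih₂ => simp only [nnf, List.any_append, ih₁, ih₂, mmatch, Bool.not_and]
  | case4 m ih => simp only [nnf, ih, mmatch, Bool.not_not]
  | _ => simp [nnf, mmatch]

end MExpr

/-- `nnf` produces NNF formulas whose disjunction is equivalent to the input.
(Termination of `nnf` is established by its definition as a total function.) -/
theorem nnf_correct {X : Type} (m : MExpr X) :
    (∀ m' ∈ nnf m, isNNF m') ∧
    (∀ (P : Type) (γ : X → P → Bool) (p : P),
      mmatch γ p m = true ↔ ∃ m' ∈ nnf m, mmatch γ p m' = true) :=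
  ⟨fun _ => MExpr.isNNF_of_mem_nnf, fun _ γ p => by
    rw [← MExpr.any_nnf_mmatch γ p m, List.any_eq_true]⟩
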